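/- Let (M,d) be a proper metric space, μ ∈ P₁(M) with μ(B̄(a,ρ)) = α > 1/2. Then every Fréchet median of μ lies in the closed ball B̄(a, 2αρ/(2α−1)). -/

import Mathlib

/-!
Write `D = d(a, x)` and `B = B̄(a, ρ)`. By the triangle inequality `d(x, p) - d(a, p)` is at least
`D - 2ρ` on `B` and at least `-D` off `B`, so its integral is at least `D(2α - 1) - 2αρ`.
A median `x` does no worse than `a`, so this integral is `≤ 0`, which gives `D ≤ 2αρ / (2α - 1)`.
-/

open MeasureTheory Metric

section

variable {M : Type*} [PseudoMetricSpace M]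

theorem indicator_closedBall_sub_dist_le_dist_sub_dist (a x : M) (ρ : ℝ) (p : M) :
    (closedBall a ρ).indicator (fun _ => 2 * (dist a x - ρ)) p - dist a x ≤
      dist x p - dist a p := by
  by_cases hp : p ∈ closedBall a ρ
  · rw [Set.indicator_of_mem hp]
    rw [mem_closedBall'] at hp
    linarith [dist_triangle_right a x p]
  · rw [Set.indicator_of_notMem hp]
    linarith [dist_triangle a x p]

variable [MeasurableSpace M] {μ : Measure M}

theorem integrable_dist_of_integrable_dist [OpensMeasurableSpace M] [IsFiniteMeasure μ]
    {x₀ : M} (h : Integrable (fun p => dist x₀ p) μ) (y : M) :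
    Integrable (fun p => dist y p) μ := by
  refine ((integrable_const (dist y x₀)).add h).mono'
    (continuous_const.dist continuous_id).aestronglyMeasurable (ae_of_all _ fun p => ?_)
  rw [Real.norm_of_nonneg dist_nonneg]
  exact dist_triangle y x₀ p

theorem dist_mul_sub_le_integral_dist_sub_dist [OpensMeasurableSpace M] [IsProbabilityMeasure μ]
    {x₀ : M} (hmom : Integrable (fun p => dist x₀ p) μ) (a x : M) (ρ : ℝ) :
    dist a x * (2 * μ.real (closedBall a ρ) - 1) - 2 * ρ * μ.real (closedBall a ρ) ≤
      ∫ p, (dist x p - dist a p) ∂μ := by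
  have hB : MeasurableSet (closedBall a ρ) := measurableSet_closedBall
  calc dist a x * (2 * μ.real (closedBall a ρ) - 1) - 2 * ρ * μ.real (closedBall a ρ)
      = ∫ p, ((closedBall a ρ).indicator (fun _ => 2 * (dist a x - ρ)) p - dist a x) ∂μ := by
        rw [integral_sub ((integrable_const _).indicator hB) (integrable_const _),
          integral_indicator_const _ hB, integral_const, probReal_univ, smul_eq_mul,
          smul_eq_mul]
        ring
    _ ≤ ∫ p, (dist x p - dist a p) ∂μ :=
        integral_mono (((integrable_const _).indicator hB).sub (integrable_const _))
          ((integrable_dist_of_integrable_dist hmom x).sub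
            (integrable_dist_of_integrable_dist hmom a))
          (indicator_closedBall_sub_dist_le_dist_sub_dist a x ρ)

end

theorem frechet_medians_in_enlarged_ball_general
    {M : Type*} [MetricSpace M]
    [MeasurableSpace M] [BorelSpace M]
    (μ : Measure M) [IsProbabilityMeasure μ]
    (x₀ : M) (hmom : Integrable (fun p => dist x₀ p) μ)
    (a : M) (ρ : ℝ)
    (α : ℝ) (hα : 1 / 2 < α)
    (hmass : μ (closedBall a ρ) = ENNReal.ofReal α)
    (x : M) (hx : ∀ y : M, (∫ p, dist x p ∂μ) ≤ ∫ p, dist y p ∂μ) :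
    x ∈ closedBall a (2 * α * ρ / (2 * α - 1)) := by
  have hmassReal : μ.real (closedBall a ρ) = α := by
    rw [measureReal_def, hmass, ENNReal.toReal_ofReal (by linarith)]
  have hmedian : ∫ p, (dist x p - dist a p) ∂μ ≤ 0 := by
    rw [integral_sub (integrable_dist_of_integrable_dist hmom x)
      (integrable_dist_of_integrable_dist hmom a)]
    linarith [hx a]
  have hbound := dist_mul_sub_le_integral_dist_sub_dist (μ := μ) hmom a x ρ
  rw [hmassReal] at hbound
  rw [mem_closedBall, dist_comm, le_div_iff₀ (by linarith)]
  linarith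

/-- If `μ(B̄(a,ρ)) = α > 1/2`, then every Fréchet median of `μ` lies in
the closed ball `B̄(a, 2αρ/(2α−1))`. -/
theorem frechet_medians_in_enlarged_ball
    {M : Type*} [MetricSpace M] [ProperSpace M]
    [MeasurableSpace M] [BorelSpace M]
    (μ : Measure M) [IsProbabilityMeasure μ]
    (x₀ : M) (hmom : Integrable (fun p => dist x₀ p) μ)
    (a : M) (ρ : ℝ) (hρ : 0 < ρ)
    (α : ℝ) (hα : 1 / 2 < α)
    (hmass : μ (closedBall a ρ) = ENNReal.ofReal α)
    (x : M) (hx : ∀ y : M, (∫ p, dist x p ∂μ) ≤ ∫ p, dist y p ∂μ) :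
    x ∈ closedBall a (2 * α * ρ / (2 * α - 1)) :=
  frechet_medians_in_enlarged_ball_general μ x₀ hmom a ρ α hα hmass x hx
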